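/- arXiv:1701.07077 — 8 statements merged into one kernel-verified Lean document; each statement's English description precedes it below -/
import Mathlib

section
/- Let m and a be positive integers with m coprime to (a-1)!. Then for every nonnegative integer ℓ, the binomial coefficients satisfy C(a-1+ℓ+m, a-1) ≡ C(a-1+ℓ, a-1) (mod m); that is, the sequence ℓ ↦ C(a-1+ℓ, a-1) is periodic modulo m with period m. -/
lemma ascFactorial_periodic (m ℓ : ℕ) : ∀ k : ℕ,
    (ℓ + m + 1).ascFactorial k ≡ (ℓ + 1).ascFactorial k [MOD m] := by
  intro k
  induction k with
  | zero => rfl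
  | succ k ih =>
    rw [Nat.ascFactorial_succ, Nat.ascFactorial_succ]
    refine Nat.ModEq.mul ?_ ih
    have h : ℓ + m + 1 + k = (ℓ + 1 + k) + m := by ring
    rw [h]
    exact Nat.add_modEq_right

/-- For positive integers `m, a` with `m` coprime to `(a-1)!`,
the binomial coefficient `C(a-1+ℓ, a-1)` is periodic in `ℓ` modulo `m` with period `m`:
`C(a-1+ℓ+m, a-1) ≡ C(a-1+ℓ, a-1) (mod m)`. -/
theorem choose_periodic_mod (m a : ℕ) (hm : 0 < m) (ha : 0 < a)
    (hcop : Nat.Coprime m (Nat.factorial (a - 1))) (ℓ : ℕ) :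
    (a - 1 + ℓ + m).choose (a - 1) ≡ (a - 1 + ℓ).choose (a - 1) [MOD m] := by
  set r := a - 1
  have key := ascFactorial_periodic m ℓ r
  rw [Nat.ascFactorial_eq_factorial_mul_choose, Nat.ascFactorial_eq_factorial_mul_choose] at key
  have h1 : ℓ + m + r = r + ℓ + m := by ring
  have h2 : ℓ + r = r + ℓ := by ring
  rw [h1, h2] at key
  exact key.cancel_left_of_coprime (by simpa [Nat.Coprime, Nat.gcd_comm] using hcop)
end

section
/- Let m and a be positive integers with m coprime to (a-1)!. Then in the ring (ZMod m)⟦q⟧ of formal power series over ℤ/mℤ, the identity (∑_{ℓ=0}^{m-1} C(a-1+ℓ, a-1) q^ℓ) · (1-q)^a = 1 - q^m holds. Equivalently, (1-q)^{-a} = (1-q^m)^{-1} · ∑_{ℓ=0}^{m-1} C(a-1+ℓ, a-1) q^ℓ, where the inverses exist in (ZMod m)⟦q⟧ since the relevant constant terms are 1. -/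
/-!
The coefficients of `(1 - q)⁻ᵃ` are `C(k + n, k)` with `k = a - 1`. As
`k! * C(k + n, k) = (n + 1) ⋯ (n + k)` is a polynomial in `n`, these coefficients are `m`-periodic
modulo `m` once `k!` is invertible, and multiplying a series with `m`-periodic coefficients by
`1 - q^m` leaves just its first period.
-/

open PowerSeries Finset

theorem Nat.cast_choose_add_left_periodic {R : Type*} [CommRing R] {m k : ℕ}
    (hm : (m : R) = 0) (hk : IsUnit (k.factorial : R)) :
    Function.Periodic (fun n : ℕ => ((k + n).choose k : R)) m := by
  intro n
  apply hk.mul_left_cancel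
  have hpoly (n : ℕ) :
      (k.factorial * (k + n).choose k : R) = (ascPochhammer R k).eval ((n : R) + 1) := by
    rw [← Nat.cast_mul, add_comm k, ← Nat.ascFactorial_eq_factorial_mul_choose,
      Nat.cast_ascFactorial, Nat.cast_succ]
  simp only [hpoly, Nat.cast_add, hm, add_zero]

theorem PowerSeries.one_sub_X_pow_mul_mk_of_periodic {R : Type*} [Ring R] {m : ℕ} {f : ℕ → R}
    (hf : Function.Periodic f m) :
    (1 - X ^ m) * mk f = ∑ ℓ ∈ range m, C (f ℓ) * X ^ ℓ := by
  ext n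
  simp only [sub_mul, one_mul, map_sub, coeff_X_pow_mul', coeff_mk, map_sum, coeff_C_mul,
    coeff_X_pow, mul_ite, mul_one, mul_zero, sum_ite_eq, mem_range]
  by_cases hn : n < m
  · simp [hn, Nat.not_le.mpr hn]
  · obtain ⟨j, rfl⟩ := Nat.exists_eq_add_of_le (Nat.not_lt.mp hn)
    simp [add_comm m j, hf j]

theorem one_sub_X_pow_inv_expansion_general (m a : ℕ) (ha : 0 < a)
    (hcop : Nat.Coprime m (Nat.factorial (a - 1))) :
    (∑ ℓ ∈ range m, (PowerSeries.C (R := ZMod m)) ((a - 1 + ℓ).choose (a - 1) : ZMod m) * X ^ ℓ)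
      * (1 - X) ^ a = 1 - X ^ m := by
  have hperiodic := Nat.cast_choose_add_left_periodic (ZMod.natCast_self m)
    ((ZMod.isUnit_iff_coprime _ _).mpr hcop.symm)
  have hinv := (invOneSubPow (ZMod m) a).val_inv
  rw [invOneSubPow_val_eq_mk_sub_one_add_choose_of_pos _ a ha,
    invOneSubPow_inv_eq_one_sub_pow] at hinv
  rw [← one_sub_X_pow_mul_mk_of_periodic hperiodic, mul_assoc, hinv, mul_one]

/-- **Proposition 1 of the paper.** For positive integers `m, a` with `m`
coprime to `(a-1)!`, in the ring `(ZMod m)⟦q⟧` of formal power series we have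
`(∑_{ℓ=0}^{m-1} C(a-1+ℓ, a-1) q^ℓ) · (1-q)^a = 1 - q^m`,
i.e. `(1-q)^{-a} = (1-q^m)^{-1} · ∑_{ℓ=0}^{m-1} C(a-1+ℓ, a-1) q^ℓ`. -/
theorem one_sub_X_pow_inv_expansion (m a : ℕ) (hm : 0 < m) (ha : 0 < a)
    (hcop : Nat.Coprime m (Nat.factorial (a - 1))) :
    (∑ ℓ ∈ range m, (PowerSeries.C (R := ZMod m)) ((a - 1 + ℓ).choose (a - 1) : ZMod m) * X ^ ℓ)
      * (1 - X) ^ a = 1 - X ^ m :=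
  one_sub_X_pow_inv_expansion_general m a ha hcop
end

section
/- Let m ≥ 2 and let k = (k_0, k_1, ...) be positive integers with m coprime to (k_0-1)! and to k_j! for every j ≥ 1. Then for every i ≥ 0, the following identity holds in (ZMod m)⟦q⟧: (∑_{ℓ_0=0}^{m-1} C(k_0-1+ℓ_0, k_0-1) q^{ℓ_0}) · (∏_{j=1}^{i} ∑_{ℓ_j=0}^{m-1} C(k_j+ℓ_j, k_j) q^{ℓ_j m^j}) · (∏_{j=0}^{i} (1-q^{m^j})^{k_j}) = 1 - q^{m^{i+1}}. Equivalently, ∏_{j=0}^{i} (1-q^{m^j})^{-k_j} = (1-q^{m^{i+1}})^{-1} · (∑_{ℓ_0=0}^{m-1} C(k_0-1+ℓ_0, k_0-1) q^{ℓ_0}) · ∏_{j=1}^{i} (∑_{ℓ_j=0}^{m-1} C(k_j+ℓ_j, k_j) q^{ℓ_j m^j}). -/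
/-!
Write `S_r(x) = ∑_{ℓ<m} C(r+ℓ, r) x^ℓ`. If `r!` is invertible mod `m`, the coefficients
`C(r+n, r)` of `(1 - x)^{-(r+1)}` are `m`-periodic in `n`, so `S_r(x)` is the truncation
`(1 - x^m) (1 - x)^{-(r+1)}`, i.e. `S_r(x) (1 - x)^{r+1} = 1 - x^m`. This is a polynomial
identity, so it may be evaluated at `x = q^{m^j}`. With `r = k₀ - 1` at `j = 0` and `r = k_j`
for `j ≥ 1`, the factors `S_r(q^{m^j}) (1 - q^{m^j})^{k_j}` turn `1 - q^{m^j}` into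
`1 - q^{m^{j+1}}`, and the product telescopes.
-/

open PowerSeries Finset

section CharP

variable {R : Type*} [CommRing R] {m r : ℕ} [CharP R m]

theorem CharP.natCast_choose_add_char (hr : IsUnit (r.factorial : R)) (n : ℕ) :
    ((r + n + m).choose r : R) = ((r + n).choose r : R) := by
  refine hr.mul_left_cancel ?_
  rw [← Nat.cast_mul, ← Nat.cast_mul, ← Nat.descFactorial_eq_factorial_mul_choose,
    ← Nat.descFactorial_eq_factorial_mul_choose, Nat.descFactorial_eq_prod_range,
    Nat.descFactorial_eq_prod_range, Nat.cast_prod, Nat.cast_prod]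
  refine prod_congr rfl fun i hi => ?_
  have hi : i < r := mem_range.mp hi
  rw [show r + n + m - i = r + n - i + m by omega, Nat.cast_add, CharP.cast_eq_zero R m, add_zero]

theorem PowerSeries.sum_range_choose_mul_one_sub_X_pow (hr : IsUnit (r.factorial : R)) :
    (∑ ℓ ∈ range m, C ((r + ℓ).choose r : R) * X ^ ℓ) * (1 - X) ^ (r + 1)
      = 1 - X ^ m := by
  have htrunc : ∑ ℓ ∈ range m, C ((r + ℓ).choose r : R) * X ^ ℓ
      = (1 - X ^ m) * mk fun n => ((r + n).choose r : R) := by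
    ext d
    simp only [map_sum, coeff_C_mul, coeff_X_pow, mul_ite, mul_one, mul_zero, sum_ite_eq,
      sub_mul, one_mul, map_sub, coeff_mk, coeff_X_pow_mul']
    by_cases hd : d < m
    · simp [hd, Nat.not_le.mpr hd]
    · obtain ⟨n, rfl⟩ := Nat.exists_eq_add_of_le (Nat.le_of_not_lt hd)
      rw [add_comm m n, ← add_assoc, CharP.natCast_choose_add_char hr]
      simp
  rw [htrunc, mul_assoc, mk_add_choose_mul_one_sub_pow_eq_one, mul_one]

theorem Polynomial.sum_range_choose_mul_one_sub_X_pow (hr : IsUnit (r.factorial : R)) :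
    (∑ ℓ ∈ range m, Polynomial.C ((r + ℓ).choose r : R) * Polynomial.X ^ ℓ)
      * (1 - Polynomial.X) ^ (r + 1) = 1 - Polynomial.X ^ m :=
  Polynomial.coe_inj.mp <| by
    rw [← Polynomial.coeToPowerSeries.ringHom_apply,
      ← Polynomial.coeToPowerSeries.ringHom_apply]
    simp only [map_sub, map_mul, map_pow, map_sum, map_one,
      Polynomial.coeToPowerSeries.ringHom_apply, Polynomial.coe_C, Polynomial.coe_X]
    exact PowerSeries.sum_range_choose_mul_one_sub_X_pow hr

theorem sum_range_choose_mul_pow_mul_one_sub_pow {A : Type*} [CommRing A] [Algebra R A]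
    (hr : IsUnit (r.factorial : R)) (x : A) :
    (∑ ℓ ∈ range m, ((r + ℓ).choose r : A) * x ^ ℓ) * (1 - x) ^ (r + 1) = 1 - x ^ m := by
  simpa using congrArg (Polynomial.aeval x) (Polynomial.sum_range_choose_mul_one_sub_X_pow hr)

theorem PowerSeries.sum_range_choose_mul_X_pow_mul_one_sub_X_pow (hr : IsUnit (r.factorial : R))
    (e : ℕ) :
    (∑ ℓ ∈ range m, C ((r + ℓ).choose r : R) * X ^ (ℓ * e)) * (1 - X ^ e) ^ (r + 1)
      = 1 - X ^ (e * m) := by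
  simpa [mul_comm _ e, pow_mul] using sum_range_choose_mul_pow_mul_one_sub_pow hr (X ^ e : R⟦X⟧)

end CharP

theorem mul_prod_Icc_mul_prod_range_eq_of_telescoping {M : Type*} [CommMonoid M] {a : M}
    {f g u : ℕ → M} (h0 : a * g 0 = u 1)
    (hstep : ∀ j, 1 ≤ j → f j * (g j * u j) = u (j + 1))
    (i : ℕ) : a * (∏ j ∈ Icc 1 i, f j) * ∏ j ∈ range (i + 1), g j = u (i + 1) := by
  induction i with
  | zero => simpa using h0
  | succ i ih =>
    rw [prod_Icc_succ_top (by omega), prod_range_succ, ← hstep (i + 1) (by omega), ← ih]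
    ac_rfl

theorem finite_product_expansion_mod_general (m : ℕ) (k : ℕ → ℕ) (hk : ∀ j, 0 < k j)
    (h0 : Nat.Coprime m (Nat.factorial (k 0 - 1)))
    (hj : ∀ j, 1 ≤ j → Nat.Coprime m (Nat.factorial (k j))) (i : ℕ) :
    (∑ ℓ ∈ range m, (PowerSeries.C (R := ZMod m)) ((k 0 - 1 + ℓ).choose (k 0 - 1) : ZMod m) * X ^ ℓ)
      * (∏ j ∈ Icc 1 i, ∑ ℓ ∈ range m,
          (PowerSeries.C (R := ZMod m)) ((k j + ℓ).choose (k j) : ZMod m) * X ^ (ℓ * m ^ j))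
      * (∏ j ∈ range (i + 1), (1 - X ^ m ^ j) ^ k j)
      = 1 - X ^ m ^ (i + 1) := by
  have hunit {r : ℕ} (hr : m.Coprime r.factorial) : IsUnit (r.factorial : ZMod m) :=
    (ZMod.isUnit_iff_coprime _ _).mpr hr.symm
  refine mul_prod_Icc_mul_prod_range_eq_of_telescoping
    (u := fun j => (1 - X ^ m ^ j : (ZMod m)⟦X⟧)) ?_ (fun j hj1 => ?_) i
  · have h := PowerSeries.sum_range_choose_mul_X_pow_mul_one_sub_X_pow (hunit h0) 1
    rw [Nat.sub_add_cancel (hk 0)] at h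
    simpa using h
  · have h := PowerSeries.sum_range_choose_mul_X_pow_mul_one_sub_X_pow (hunit (hj j hj1)) (m ^ j)
    rw [pow_succ, ← h, pow_succ]

/-- **finite product expansion, equation (2) of the paper.**
Let `m ≥ 2` and `k₀, k₁, …` be positive integers with `m` coprime to `(k₀-1)!` and to
`k_j!` for `j ≥ 1`.  Then for every `i ≥ 0`, in `(ZMod m)⟦q⟧` we have
`(∑_{ℓ₀=0}^{m-1} C(k₀-1+ℓ₀, k₀-1) q^{ℓ₀}) · (∏_{j=1}^{i} ∑_{ℓ=0}^{m-1} C(k_j+ℓ, k_j) q^{ℓ m^j})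
  · (∏_{j=0}^{i} (1-q^{m^j})^{k_j}) = 1 - q^{m^{i+1}}`. -/
theorem finite_product_expansion_mod (m : ℕ) (hm : 2 ≤ m) (k : ℕ → ℕ) (hk : ∀ j, 0 < k j)
    (h0 : Nat.Coprime m (Nat.factorial (k 0 - 1)))
    (hj : ∀ j, 1 ≤ j → Nat.Coprime m (Nat.factorial (k j))) (i : ℕ) :
    (∑ ℓ ∈ range m, (PowerSeries.C (R := ZMod m)) ((k 0 - 1 + ℓ).choose (k 0 - 1) : ZMod m) * X ^ ℓ)
      * (∏ j ∈ Icc 1 i, ∑ ℓ ∈ range m,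
          (PowerSeries.C (R := ZMod m)) ((k j + ℓ).choose (k j) : ZMod m) * X ^ (ℓ * m ^ j))
      * (∏ j ∈ range (i + 1), (1 - X ^ m ^ j) ^ k j)
      = 1 - X ^ m ^ (i + 1) :=
  finite_product_expansion_mod_general m k hk h0 hj i
end

section
/- Let m ≥ 2 and let k = (k_0, k_1, ...) be positive integers with m coprime to (k_0-1)! and to k_j! for every j ≥ 1. Let n ≥ 0 and let N be any integer with m^{N+1} > n. Then the coefficient of q^n in ∏_{j=0}^{N} G_{m^j}^{k_j} is equal, in ℤ/mℤ, to the coefficient of q^n in (∑_{ℓ_0=0}^{m-1} C(k_0-1+ℓ_0, k_0-1) q^{ℓ_0}) · ∏_{j=1}^{N} (∑_{ℓ_j=0}^{m-1} C(k_j+ℓ_j, k_j) q^{ℓ_j m^j}). (This is the coefficientwise form of the expansion B_m^{(k)}(q) ≡ (∑_{ℓ_0=0}^{m-1} C(k_0-1+ℓ_0,k_0-1) q^{ℓ_0}) ∏_{j=1}^{∞} (∑_{ℓ_j=0}^{m-1} C(k_j+ℓ_j,k_j) q^{ℓ_j m^j}) (mod m) for the generating function B_m^{(k)}(q) = ∏_{j=0}^{∞}(1-q^{m^j})^{-k_j}.)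 -/
/-!
If `j!` is invertible modulo `m`, the coefficients `C(j+t, j)` of `(1 - q)^{-(j+1)}` are
`m`-periodic in `t` modulo `m`, because `j! C(j+t, j) = (t+1)⋯(t+j)` is a polynomial in `t`.
Hence `(1 - q^{rm}) G_r^{j+1} = ∑_{ℓ<m} C(j+ℓ, j) q^{ℓr}`, that is,
`G_r^{j+1} = (∑_{ℓ<m} C(j+ℓ, j) q^{ℓr}) G_{rm}`. Starting from `G_1^{k_0}` and absorbing the
factor `G_{m^j}` produced at each stage into `G_{m^j}^{k_j}` (whence `k_0 - 1` but `k_j`), the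
product telescopes to the claimed finite product times `G_{m^{N+1}} ≡ 1 (mod q^{m^{N+1}})`.
-/

open PowerSeries Finset

theorem Nat.periodic_cast_add_choose {R : Type*} [CommRing R] {j m : ℕ}
    (hj : IsUnit (j.factorial : R)) (hm : (m : R) = 0) :
    Function.Periodic (fun t ↦ ((j + t).choose j : R)) m := by
  intro t
  apply hj.mul_left_cancel
  have h : ∀ s, (j.factorial * (j + s).choose j : R)
      = (ascPochhammer R j).eval ((s + 1 : ℕ) : R) := by
    intro s
    rw [← Nat.cast_ascFactorial, Nat.ascFactorial_eq_factorial_mul_choose, add_comm s,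
      Nat.cast_mul]
  simp only [h]
  push_cast [hm]
  ring_nf

namespace PowerSeries

variable {R : Type*} [CommRing R]

theorem one_sub_X_pow_mul_mk_of_periodic_s3 {m : ℕ} {f : ℕ → R} (hf : Function.Periodic f m) :
    (1 - X ^ m) * PowerSeries.mk f = ∑ s ∈ range m, C (f s) * X ^ s := by
  ext n
  simp only [sub_mul, one_mul, map_sub, coeff_X_pow_mul', coeff_mk, map_sum, coeff_C_mul_X_pow,
    sum_ite_eq, mem_range]
  by_cases hn : m ≤ n
  · rw [if_pos hn, if_neg (by omega), ← hf (n - m), Nat.sub_add_cancel hn, sub_self]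
  · rw [if_neg hn, if_pos (by omega), sub_zero]

theorem eq_expand_mk_one_of_one_sub_X_pow_mul_eq_one {r : ℕ} (hr : r ≠ 0) {g : R⟦X⟧}
    (hg : (1 - X ^ r) * g = 1) : g = expand r hr (PowerSeries.mk 1 : R⟦X⟧) := by
  have hE : (1 - X ^ r) * expand r hr (PowerSeries.mk 1 : R⟦X⟧) = 1 := by
    rw [← expand_X r hr, ← map_one (expand r hr), ← map_sub, ← map_mul, mul_comm,
      mk_one_mul_one_sub_eq_one, map_one]
  calc g = g * ((1 - X ^ r) * expand r hr (PowerSeries.mk 1)) := by rw [hE, mul_one]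
    _ = (1 - X ^ r) * g * expand r hr (PowerSeries.mk 1) := by ring
    _ = expand r hr (PowerSeries.mk 1) := by rw [hg, one_mul]

noncomputable def truncChooseSeries (R : Type*) [CommRing R] (m r j : ℕ) : R⟦X⟧ :=
  ∑ ℓ ∈ range m, C ((j + ℓ).choose j : R) * X ^ (ℓ * r)

theorem one_sub_X_pow_mul_pow_succ {m r j : ℕ} (hr : r ≠ 0) {g : R⟦X⟧}
    (hg : (1 - X ^ r) * g = 1) (hj : IsUnit (j.factorial : R)) (hm : (m : R) = 0) :
    (1 - X ^ (r * m)) * g ^ (j + 1) = truncChooseSeries R m r j := by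
  have h1 : (1 - X ^ m) * (PowerSeries.mk 1 : R⟦X⟧) ^ (j + 1)
      = ∑ s ∈ range m, C ((j + s).choose j : R) * X ^ s := by
    rw [mk_one_pow_eq_mk_choose_add]
    exact one_sub_X_pow_mul_mk_of_periodic_s3 (Nat.periodic_cast_add_choose hj hm)
  have h2 := congrArg (expand r hr) h1
  simp only [map_mul, map_sub, map_one, map_pow, expand_X, map_sum, expand_C] at h2
  rw [eq_expand_mk_one_of_one_sub_X_pow_mul_eq_one hr hg, truncChooseSeries]
  simpa only [← pow_mul, mul_comm r] using h2

theorem pow_succ_eq_truncChooseSeries_mul {m r j : ℕ} (hr : r ≠ 0) {g h : R⟦X⟧}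
    (hg : (1 - X ^ r) * g = 1) (hh : (1 - X ^ (r * m)) * h = 1)
    (hj : IsUnit (j.factorial : R)) (hm : (m : R) = 0) :
    g ^ (j + 1) = truncChooseSeries R m r j * h := by
  calc g ^ (j + 1) = g ^ (j + 1) * ((1 - X ^ (r * m)) * h) := by rw [hh, mul_one]
    _ = (1 - X ^ (r * m)) * g ^ (j + 1) * h := by ring
    _ = truncChooseSeries R m r j * h := by rw [one_sub_X_pow_mul_pow_succ hr hg hj hm]

theorem coeff_mul_of_one_sub_X_pow_mul_eq_one {r n : ℕ} (hn : n < r) {g : R⟦X⟧}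
    (hg : (1 - X ^ r) * g = 1) (f : R⟦X⟧) : coeff n (f * g) = coeff n f := by
  have hg' : f * g = f + X ^ r * (f * g) := by linear_combination f * hg
  rw [hg', map_add, coeff_X_pow_mul', if_neg (by omega), add_zero]

theorem prod_range_pow_eq_mul {m : ℕ} (hm0 : m ≠ 0) (hm : (m : R) = 0) {k : ℕ → ℕ}
    (hk0 : 0 < k 0) (h0 : IsUnit ((k 0 - 1).factorial : R))
    (hj : ∀ j, 1 ≤ j → IsUnit ((k j).factorial : R))
    {G : ℕ → R⟦X⟧} (hG : ∀ r, 1 ≤ r → (1 - X ^ r) * G r = 1) (i : ℕ) :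
    ∏ j ∈ range (i + 1), G (m ^ j) ^ k j
      = (truncChooseSeries R m 1 (k 0 - 1) * ∏ j ∈ Icc 1 i, truncChooseSeries R m (m ^ j) (k j))
        * G (m ^ (i + 1)) := by
  have hG' : ∀ j, (1 - X ^ m ^ j) * G (m ^ j) = 1 := fun j ↦
    hG _ (Nat.one_le_iff_ne_zero.2 (pow_ne_zero j hm0))
  induction i with
  | zero =>
    have h := pow_succ_eq_truncChooseSeries_mul one_ne_zero (hG' 0) (by simpa using hG' 1) h0 hm
    rw [Nat.sub_add_cancel hk0] at h
    simpa using h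
  | succ i ih =>
    have h := pow_succ_eq_truncChooseSeries_mul (pow_ne_zero _ hm0) (hG' (i + 1))
      (by simpa only [← pow_succ] using hG' (i + 2)) (hj (i + 1) (by omega)) hm
    rw [prod_range_succ, ih, prod_Icc_succ_top (by omega), mul_assoc, ← pow_succ', h]
    ring

end PowerSeries

theorem coloured_mary_genfun_expansion_mod_general (m : ℕ) (k : ℕ → ℕ) (hk : ∀ j, 0 < k j)
    (h0 : Nat.Coprime m (Nat.factorial (k 0 - 1)))
    (hj : ∀ j, 1 ≤ j → Nat.Coprime m (Nat.factorial (k j)))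
    (G : ℕ → PowerSeries (ZMod m)) (hG : ∀ r, 1 ≤ r → (1 - X ^ r) * G r = 1)
    (n N : ℕ) (hN : n < m ^ (N + 1)) :
    PowerSeries.coeff (R := ZMod m) n (∏ j ∈ range (N + 1), (G (m ^ j)) ^ k j)
      = PowerSeries.coeff (R := ZMod m) n
          ((∑ ℓ ∈ range m, (PowerSeries.C (R := ZMod m)) ((k 0 - 1 + ℓ).choose (k 0 - 1) : ZMod m) * X ^ ℓ)
            * ∏ j ∈ Icc 1 N, ∑ ℓ ∈ range m,
                (PowerSeries.C (R := ZMod m)) ((k j + ℓ).choose (k j) : ZMod m) * X ^ (ℓ * m ^ j)) := by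
  have hm0 : m ≠ 0 := by rintro rfl; simp at hN
  have hunit : ∀ i : ℕ, m.Coprime i.factorial → IsUnit (i.factorial : ZMod m) :=
    fun i h ↦ (ZMod.isUnit_iff_coprime _ _).2 h.symm
  have hGN : (1 - X ^ m ^ (N + 1)) * G (m ^ (N + 1)) = 1 :=
    hG _ (Nat.one_le_iff_ne_zero.2 (pow_ne_zero _ hm0))
  rw [prod_range_pow_eq_mul hm0 (ZMod.natCast_self m) (hk 0) (hunit _ h0)
    (fun j hj1 ↦ hunit _ (hj j hj1)) hG N, coeff_mul_of_one_sub_X_pow_mul_eq_one hN hGN]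
  simp only [truncChooseSeries, mul_one]

/-- **Theorem 2 of the paper, coefficientwise form.**
Let `m ≥ 2` and `k₀, k₁, …` be positive integers with `m` coprime to `(k₀-1)!` and to
`k_j!` for `j ≥ 1`.  Let `G r` denote the inverse of `1 - q^r` in `(ZMod m)⟦q⟧`.
For `n ≥ 0` and any `N` with `m^{N+1} > n`, the coefficient of `q^n` in
`∏_{j=0}^{N} G_{m^j}^{k_j}` equals the coefficient of `q^n` in
`(∑_{ℓ₀=0}^{m-1} C(k₀-1+ℓ₀, k₀-1) q^{ℓ₀}) · ∏_{j=1}^{N} (∑_{ℓ=0}^{m-1} C(k_j+ℓ, k_j) q^{ℓ m^j})`. -/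
theorem coloured_mary_genfun_expansion_mod (m : ℕ) (hm : 2 ≤ m) (k : ℕ → ℕ) (hk : ∀ j, 0 < k j)
    (h0 : Nat.Coprime m (Nat.factorial (k 0 - 1)))
    (hj : ∀ j, 1 ≤ j → Nat.Coprime m (Nat.factorial (k j)))
    (G : ℕ → PowerSeries (ZMod m)) (hG : ∀ r, 1 ≤ r → (1 - X ^ r) * G r = 1)
    (n N : ℕ) (hN : n < m ^ (N + 1)) :
    PowerSeries.coeff (R := ZMod m) n (∏ j ∈ range (N + 1), (G (m ^ j)) ^ k j)
      = PowerSeries.coeff (R := ZMod m) n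
          ((∑ ℓ ∈ range m, (PowerSeries.C (R := ZMod m)) ((k 0 - 1 + ℓ).choose (k 0 - 1) : ZMod m) * X ^ ℓ)
            * ∏ j ∈ Icc 1 N, ∑ ℓ ∈ range m,
                (PowerSeries.C (R := ZMod m)) ((k j + ℓ).choose (k j) : ZMod m) * X ^ (ℓ * m ^ j)) :=
  coloured_mary_genfun_expansion_mod_general m k hk h0 hj G hG n N hN
end

section
/- Let m ≥ 2 and let k = (k_0, k_1, ...) be positive integers with m coprime to (k_0-1)! and to k_j! for every j ≥ 1. Let n ≥ 0 have base-m representation n = d_0 + d_1 m + ... + d_t m^t with 0 ≤ d_j ≤ m-1. Then the number b_m^k(n) of k-coloured m-ary partitions of n satisfies b_m^k(n) ≡ C(k_0-1+d_0, k_0-1) · ∏_{j=1}^{t} C(k_j+d_j, k_j) (mod m). -/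
open Finset

/-!
Removing the parts equal to `1` from a partition of `r + m q` (with `r < m`) and dividing the
other parts by `m` leaves a partition of some `a ≤ q` for the colours `k₁, k₂, …`, whence
`b_k(r + m q) = ∑_{a ≤ q} C(r + m (q - a) + k₀ - 1, k₀ - 1) · b_{k₁,k₂,…}(a)`.
As `(k₀ - 1)! · C(s + k₀ - 1, k₀ - 1) = (s + 1) ⋯ (s + k₀ - 1)` is a polynomial in `s` and
`(k₀ - 1)!` is invertible modulo `m`, every coefficient is `≡ C(r + k₀ - 1, k₀ - 1)`, so
`b_k(r + m q) ≡ C(r + k₀ - 1, k₀ - 1) · ∑_{a ≤ q} b_{k₁,k₂,…}(a) (mod m)`.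
That partial sum counts the partitions of `q` whose part `1` has one more colour, i.e. it is
`b_{k₁+1,k₂,…}(q)`, and the same step applied to the digits of `q` yields the factors
`C(k_j + d_j, k_j)`.
-/

/-- A `k`-coloured `m`-ary partition of `n`: a finitely supported function
`c : ℕ × ℕ →₀ ℕ`, where `c (j, i)` is the multiplicity of the part `m^j` in colour `i`,
with `c (j, i) = 0` whenever `i ≥ k j`, and total sum `∑ c (j, i) · m^j = n`. -/
def IsColouredMaryPartition (m : ℕ) (k : ℕ → ℕ) (n : ℕ) (c : ℕ × ℕ →₀ ℕ) : Prop :=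
  (∀ j i, k j ≤ i → c (j, i) = 0) ∧ c.sum (fun p v => v * m ^ p.1) = n

theorem Nat.card_add_mul_eq_sum {α β : Type*} (u : α → ℕ) (v : β → ℕ)
    [∀ s, Finite {x // u x = s}] [∀ a, Finite {y // v y = a}] {m : ℕ} (hm : 0 < m) (n : ℕ) :
    Nat.card {p : α × β // u p.1 + m * v p.2 = n} =
      ∑ a ∈ range (n / m + 1), Nat.card {x // u x = n - m * a} * Nat.card {y // v y = a} := by
  let e : {p : α × β // u p.1 + m * v p.2 = n} ≃
      Σ a : Fin (n / m + 1), {x // u x = n - m * a} × {y // v y = a} :=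
    { toFun p := ⟨⟨v p.1.2, Nat.lt_succ_of_le <| (Nat.le_div_iff_mul_le hm).2 <| by
          have := p.2; rw [mul_comm]; omega⟩,
        ⟨p.1.1, show u p.1.1 = n - m * v p.1.2 by have := p.2; omega⟩, ⟨p.1.2, rfl⟩⟩
      invFun q := ⟨(q.2.1, q.2.2), by
        obtain ⟨a, ⟨x, hx⟩, ⟨y, hy⟩⟩ := q
        have : m * a ≤ n :=
          (Nat.mul_le_mul_left m (Nat.lt_succ_iff.1 a.2)).trans (Nat.mul_div_le n m)
        simp only [hx, hy]; omega⟩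
      left_inv p := rfl
      right_inv := by rintro ⟨⟨a, ha⟩, ⟨x, hx⟩, ⟨y, hy : v y = a⟩⟩; subst hy; rfl }
  rw [Nat.card_congr e, Nat.card_sigma, ← Fin.sum_univ_eq_sum_range]
  simp only [Nat.card_prod]

theorem Nat.succ_multichoose_eq (J s : ℕ) : (J + 1).multichoose s = (J + s).choose J := by
  rw [Nat.multichoose_eq, Nat.add_right_comm, Nat.add_sub_cancel, Nat.choose_symm_add]

theorem Nat.succ_multichoose_add_mul_modEq {m J : ℕ} (h : m.Coprime J.factorial) (r b : ℕ) :
    (J + 1).multichoose (r + m * b) ≡ (J + 1).multichoose r [MOD m] := by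
  apply Nat.ModEq.cancel_left_of_coprime h
  rw [Nat.succ_multichoose_eq, Nat.succ_multichoose_eq, add_comm J, add_comm J,
    ← Nat.ascFactorial_eq_factorial_mul_choose, ← Nat.ascFactorial_eq_factorial_mul_choose,
    ← ZMod.natCast_eq_natCast_iff, Nat.cast_ascFactorial, Nat.cast_ascFactorial]
  simp

theorem Nat.sum_range_succ_mul_pow (d : ℕ → ℕ) (m t : ℕ) :
    ∑ j ∈ range (t + 1), d j * m ^ j = d 0 + m * ∑ j ∈ range t, d (j + 1) * m ^ j := by
  rw [sum_range_succ', mul_sum, add_comm]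
  simp only [pow_zero, mul_one, pow_succ]
  congr 1
  exact sum_congr rfl fun _ _ => by ring

namespace ColouredMary

def ColourBounded (k : ℕ → ℕ) (c : ℕ × ℕ →₀ ℕ) : Prop := ∀ j i, k j ≤ i → c (j, i) = 0

def RowBounded (K : ℕ) (r : ℕ →₀ ℕ) : Prop := ∀ i, K ≤ i → r i = 0

def weight (m : ℕ) (c : ℕ × ℕ →₀ ℕ) : ℕ := c.sum fun p v => v * m ^ p.1

/-- `b_m^k(n)`. -/
noncomputable def count (m : ℕ) (k : ℕ → ℕ) (n : ℕ) : ℕ :=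
  Nat.card {c // IsColouredMaryPartition m k n c}

theorem mul_pow_le_weight (m : ℕ) (c : ℕ × ℕ →₀ ℕ) (p : ℕ × ℕ) : c p * m ^ p.1 ≤ weight m c := by
  have := Finsupp.single_le_sum c (g := fun p v => v * m ^ p.1) (fun _ _ => Nat.zero_le _) p
  rwa [Finsupp.sum_single_index (zero_mul _)] at this

theorem finite_isColouredMaryPartition {m : ℕ} (hm : 2 ≤ m) (k : ℕ → ℕ) (n : ℕ) :
    Finite {c // IsColouredMaryPartition m k n c} := by
  refine Set.Finite.to_subtype (s := {c | IsColouredMaryPartition m k n c}) <|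
    ((range (n + 1) ×ˢ range ((range (n + 1)).sup k)).finsupp
      fun _ => range (n + 1)).finite_toSet.subset ?_
  rintro c ⟨hcol, hsum⟩
  have hle (p : ℕ × ℕ) : c p * m ^ p.1 ≤ n := hsum ▸ mul_pow_le_weight m c p
  have hpow (j : ℕ) : j < m ^ j ∧ 0 < m ^ j := ⟨Nat.lt_pow_self hm, Nat.pow_pos (by omega)⟩
  simp only [mem_coe, mem_finsupp_iff, mem_range, Nat.lt_succ_iff]
  refine ⟨fun ⟨j, i⟩ hp => ?_, fun p _ => (Nat.le_mul_of_pos_right _ (hpow p.1).2).trans (hle p)⟩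
  have hc : c (j, i) ≠ 0 := Finsupp.mem_support_iff.1 hp
  have hj : j ≤ n :=
    ((hpow j).1.trans_le (Nat.le_mul_of_pos_left _ (Nat.pos_of_ne_zero hc))).le.trans (hle (j, i))
  have hi : i < k j := by by_contra! h; exact hc (hcol j i h)
  simp only [mem_product, mem_range]
  exact ⟨Nat.lt_succ_of_le hj, hi.trans_le (le_sup (mem_range.2 (Nat.lt_succ_of_le hj)))⟩

def rowEquiv : ℕ ⊕ ℕ × ℕ ≃ ℕ × ℕ where
  toFun := Sum.elim (fun i => (0, i)) (fun p => (p.1 + 1, p.2))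
  invFun
    | (0, i) => .inl i
    | (j + 1, i) => .inr (j, i)
  left_inv := by rintro (i | ⟨j, i⟩) <;> rfl
  right_inv := by rintro ⟨_ | j, i⟩ <;> rfl

/-- Splits off the parts equal to `1`; the other parts, divided by `m`, are kept in the
second component. -/
noncomputable def splitRow : (ℕ × ℕ →₀ ℕ) ≃ (ℕ →₀ ℕ) × (ℕ × ℕ →₀ ℕ) :=
  (Finsupp.equivCongrLeft rowEquiv).symm.trans Finsupp.sumFinsuppEquivProdFinsupp

@[simp] lemma splitRow_fst_apply (c : ℕ × ℕ →₀ ℕ) (i : ℕ) : (splitRow c).1 i = c (0, i) := rfl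

@[simp] lemma splitRow_snd_apply (c : ℕ × ℕ →₀ ℕ) (p : ℕ × ℕ) :
    (splitRow c).2 p = c (p.1 + 1, p.2) := rfl

lemma weight_eq_splitRow (m : ℕ) (c : ℕ × ℕ →₀ ℕ) :
    weight m c = (splitRow c).1.sum (fun _ v => v) + m * weight m (splitRow c).2 := by
  obtain ⟨x, rfl⟩ := splitRow.symm.surjective c
  have : splitRow.symm x = Finsupp.equivMapDomain rowEquiv (x.1.sumElim x.2) := rfl
  rw [Equiv.apply_symm_apply, weight, weight, this, Finsupp.sum_equivMapDomain,
    Finsupp.sum_sumElim, Finsupp.mul_sum]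
  simp only [rowEquiv, Equiv.coe_fn_mk, Function.comp_def, Sum.elim_inl, Sum.elim_inr, pow_zero,
    mul_one, pow_succ]
  congr 1
  exact Finsupp.sum_congr fun _ _ => by ring

lemma colourBounded_iff_splitRow (k : ℕ → ℕ) (c : ℕ × ℕ →₀ ℕ) :
    ColourBounded k c ↔
      RowBounded (k 0) (splitRow c).1 ∧ ColourBounded (fun j => k (j + 1)) (splitRow c).2 := by
  simp only [ColourBounded, RowBounded, splitRow_fst_apply, splitRow_snd_apply]
  exact ⟨fun h => ⟨h 0, fun j => h (j + 1)⟩, fun ⟨h0, h⟩ j => j.casesOn h0 h⟩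

noncomputable def equivRowProd (m : ℕ) (k : ℕ → ℕ) (n : ℕ) :
    {c // IsColouredMaryPartition m k n c} ≃
      {p : Subtype (RowBounded (k 0)) ×
          {c // ColourBounded (fun j => k (j + 1)) c} //
        p.1.1.sum (fun _ v => v) + m * weight m p.2.1 = n} :=
  (Equiv.subtypeSubtypeEquivSubtypeInter (ColourBounded k) (weight m · = n)).symm.trans <|
    Equiv.subtypeEquiv
      ((splitRow.subtypeEquiv (colourBounded_iff_splitRow k)).trans Equiv.subtypeProdEquivProd)
      fun c => by rw [weight_eq_splitRow]; rfl

noncomputable def equivFinsuppAntidiag (K s : ℕ) :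
    {r : Subtype (RowBounded K) // r.1.sum (fun _ v => v) = s} ≃
      finsuppAntidiag (range K) s :=
  (Equiv.subtypeSubtypeEquivSubtypeInter (RowBounded K)
    (fun r => r.sum (fun _ v => v) = s)).trans <| Equiv.subtypeEquivRight fun r => by
    simp only [RowBounded, mem_finsuppAntidiag', subset_iff, Finsupp.mem_support_iff, mem_range]
    grind

theorem count_eq_sum {m : ℕ} (hm : 2 ≤ m) (k : ℕ → ℕ) (n : ℕ) :
    count m k n = ∑ a ∈ range (n / m + 1),
      (k 0).multichoose (n - m * a) * count m (fun j => k (j + 1)) a := by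
  let e (a : ℕ) : {y : {c // ColourBounded (fun j => k (j + 1)) c} // weight m y.1 = a} ≃
      {c // IsColouredMaryPartition m (fun j => k (j + 1)) a c} :=
    Equiv.subtypeSubtypeEquivSubtypeInter (ColourBounded _) (weight m · = a)
  have := finite_isColouredMaryPartition hm (fun j => k (j + 1))
  have (a : ℕ) := Finite.of_equiv _ (e a).symm
  have (s : ℕ) := Finite.of_equiv _ (equivFinsuppAntidiag (k 0) s).symm
  rw [count, Nat.card_congr (equivRowProd m k n)]
  refine (Nat.card_add_mul_eq_sum (fun r : Subtype (RowBounded (k 0)) => r.1.sum fun _ v => v)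
    (fun c : Subtype (ColourBounded _) => weight m c.1) (by omega) n).trans <|
      sum_congr rfl fun a _ => ?_
  rw [Nat.card_congr (e a), Nat.card_congr (equivFinsuppAntidiag _ _), Nat.card_eq_fintype_card,
    Fintype.card_coe, card_finsuppAntidiag_nat_eq_multichoose, card_range, count]

theorem sum_range_count {m : ℕ} (hm : 2 ≤ m) (k : ℕ → ℕ) (q : ℕ) :
    ∑ u ∈ range (q + 1), count m k u = count m (Function.update k 0 (k 0 + 1)) q := by
  have hm0 : 0 < m := by omega
  rw [count_eq_sum hm]
  simp only [Function.update_self, ne_eq, Nat.add_one_ne_zero, not_false_eq_true,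
    Function.update_of_ne]
  simp_rw [count_eq_sum hm k]
  rw [sum_comm' (t' := range (q / m + 1)) (s' := fun a => Ico (m * a) (q + 1)) fun u a => by
    simp only [mem_range, mem_Ico, Nat.lt_succ_iff, Nat.le_div_iff_mul_le hm0, mul_comm a m]
    omega]
  refine sum_congr rfl fun a ha => ?_
  have hma : m * a ≤ q := (Nat.mul_le_mul_left m (Nat.lt_succ_iff.1 (mem_range.1 ha))).trans
    (Nat.mul_div_le q m)
  rw [← sum_mul, sum_Ico_eq_sum_range, show q + 1 - m * a = q - m * a + 1 by omega]
  simp only [Nat.add_sub_cancel_left]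
  rw [Nat.sum_range_multichoose, Nat.succ_multichoose_eq, add_comm]

theorem count_zero {m : ℕ} (hm : 0 < m) (k : ℕ → ℕ) : count m k 0 = 1 := by
  refine Nat.card_eq_one_iff_exists.2 ⟨⟨0, fun _ _ _ => rfl, Finsupp.sum_zero_index⟩, ?_⟩
  rintro ⟨c, -, hc⟩
  ext p
  have := mul_pow_le_weight m c p
  rw [show weight m c = 0 from hc, Nat.le_zero, mul_eq_zero] at this
  simpa [hm.ne'] using this

theorem count_add_mul_modEq {m : ℕ} (hm : 2 ≤ m) {k : ℕ → ℕ} (hk : 0 < k 0)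
    (h : m.Coprime (k 0 - 1).factorial) {r : ℕ} (hr : r < m) (q : ℕ) :
    count m k (r + m * q) ≡
      (k 0).multichoose r * count m (Function.update (fun j => k (j + 1)) 0 (k 1 + 1)) q
        [MOD m] := by
  obtain ⟨J, hJ⟩ : ∃ J, k 0 = J + 1 := ⟨k 0 - 1, by omega⟩
  rw [hJ, Nat.add_sub_cancel] at h
  have hdiv : (r + m * q) / m = q := by
    rw [Nat.add_mul_div_left _ _ (by omega), Nat.div_eq_of_lt hr, zero_add]
  rw [count_eq_sum hm, hdiv, ← sum_range_count hm, mul_sum, hJ]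
  refine Nat.ModEq.sum fun a ha => Nat.ModEq.mul_right _ ?_
  have hma : m * a ≤ m * q := Nat.mul_le_mul_left m (Nat.lt_succ_iff.1 (mem_range.1 ha))
  rw [show r + m * q - m * a = r + m * (q - a) by rw [Nat.mul_sub, Nat.add_sub_assoc hma]]
  exact Nat.succ_multichoose_add_mul_modEq h r (q - a)

theorem count_update_modEq_prod {m : ℕ} (hm : 2 ≤ m) (t : ℕ) (k d : ℕ → ℕ)
    (hk : ∀ j < t, m.Coprime (k j).factorial) (hd : ∀ j < t, d j < m) :
    count m (Function.update k 0 (k 0 + 1)) (∑ j ∈ range t, d j * m ^ j) ≡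
      ∏ j ∈ range t, (k j + d j).choose (k j) [MOD m] := by
  induction t generalizing k d with
  | zero => rw [sum_range_zero, prod_range_zero, count_zero (by omega)]
  | succ t ih =>
    have step := count_add_mul_modEq hm (k := Function.update k 0 (k 0 + 1)) (by simp)
      (by simpa using hk 0 (by omega)) (hd 0 (by omega)) (∑ j ∈ range t, d (j + 1) * m ^ j)
    have ih' := ih (fun j => k (j + 1)) (fun j => d (j + 1)) (fun j hj => hk (j + 1) (by omega))
      (fun j hj => hd (j + 1) (by omega))
    rw [Nat.sum_range_succ_mul_pow, prod_range_succ', mul_comm _ ((k 0 + d 0).choose (k 0))]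
    simp only [Function.update_self, ne_eq, Nat.add_one_ne_zero, not_false_eq_true,
      Function.update_of_ne, Nat.succ_multichoose_eq] at step
    exact step.trans (ih'.mul_left _)

end ColouredMary

/-- **Corollary 3 of the paper.**  Let `m ≥ 2` and `k₀, k₁, …` be positive
integers with `m` coprime to `(k₀-1)!` and to `k_j!` for `j ≥ 1`.  If
`n = d₀ + d₁ m + ⋯ + d_t m^t` with `0 ≤ d_j ≤ m-1` is the base-`m` representation of `n`,
then `b_m^k(n) ≡ C(k₀-1+d₀, k₀-1) · ∏_{j=1}^{t} C(k_j+d_j, k_j) (mod m)`. -/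
theorem coloured_mary_count_mod (m : ℕ) (hm : 2 ≤ m) (k : ℕ → ℕ) (hk : ∀ j, 0 < k j)
    (h0 : Nat.Coprime m (Nat.factorial (k 0 - 1)))
    (hj : ∀ j, 1 ≤ j → Nat.Coprime m (Nat.factorial (k j)))
    (n t : ℕ) (d : ℕ → ℕ) (hd : ∀ j, j ≤ t → d j ≤ m - 1)
    (hn : n = ∑ j ∈ range (t + 1), d j * m ^ j) :
    Nat.card {c : ℕ × ℕ →₀ ℕ // IsColouredMaryPartition m k n c}
      ≡ (k 0 - 1 + d 0).choose (k 0 - 1) * ∏ j ∈ Icc 1 t, (k j + d j).choose (k j) [MOD m] := by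
  have hdm (j : ℕ) (hjt : j ≤ t) : d j < m := by have := hd j hjt; omega
  have low := ColouredMary.count_add_mul_modEq hm (hk 0) h0 (hdm 0 t.zero_le)
    (∑ j ∈ range t, d (j + 1) * m ^ j)
  have high := ColouredMary.count_update_modEq_prod hm t (fun j => k (j + 1)) (fun j => d (j + 1))
    (fun j _ => hj (j + 1) (by omega)) (fun j _ => hdm (j + 1) (by omega))
  obtain ⟨J, hJ⟩ : ∃ J, k 0 = J + 1 := ⟨k 0 - 1, by have := hk 0; omega⟩
  rw [hn, Nat.sum_range_succ_mul_pow, ← Finset.Ico_add_one_right_eq_Icc, prod_Ico_eq_prod_range,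
    Nat.add_sub_cancel, hJ, Nat.add_sub_cancel, ← Nat.succ_multichoose_eq, ← hJ]
  simp only [add_comm 1]
  exact low.trans (high.mul_left _)
end

section
/- Let m ≥ 2 and let k = (k_0, k_1, ...) be positive integers with m coprime to (k_0-1)! and to k_j! for every j ≥ 1. Then for every N ≥ 0, the following identity holds in (ZMod m)⟦q⟧: ∑_{i=0}^{N} ∏_{j=0}^{i} (G_{m^j}^{k_j} - 1) = (∑_{ℓ_0=1}^{m} C(k_0-1+ℓ_0, k_0-1) q^{ℓ_0}) · ∑_{i=0}^{N} G_{m^{i+1}} · ∏_{j=1}^{i} (∑_{ℓ_j=0}^{m-1} (C(k_j+ℓ_j, k_j) - 1) q^{ℓ_j m^j}). (This is the finite form of the expansion C_m^{(k)}(q) ≡ 1 + (∑_{ℓ_0=1}^{m} C(k_0-1+ℓ_0,k_0-1) q^{ℓ_0}) ∑_{i=0}^{∞} (1-q^{m^{i+1}})^{-1} ∏_{j=1}^{i} (∑_{ℓ_j=0}^{m-1} (C(k_j+ℓ_j,k_j)-1) q^{ℓ_j m^j}) (mod m) for the generating function C_m^{(k)}(q) = 1 + ∑_{i=0}^{∞}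 ∏_{j=0}^{i} ((1-q^{m^j})^{-k_j} - 1) of k-coloured m-ary partitions without gaps.) -/
/-!
Write `S_K(Y) = ∑_{ℓ<m} C(K+ℓ, K) Y^ℓ` for the truncation of `(1 - Y)^{-(K+1)}`. In characteristic
`m`, if `m` is prime to `K!`, then `(1 - Y)^{K+1} S_K(Y) = 1 - Y^m`: multiplying `S_{K+1}` by
`1 - Y` gives `S_K` minus `C(K+m, K+1) Y^m`, and that coefficient is divisible by `m`. Hence
`G_r^{K+1} = G_{rm} S_K(q^r)`. For `r = m^j` this gives
`G_{m^j} (G_{m^j}^{k_j} - 1) = G_{m^{j+1}} (S_{k_j} - S_0)(q^{m^j})`, and for `r = 1`, since also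
`C(K+m, K) ≡ 1`, it gives `G_1^{k_0} - 1 = G_m ∑_{ℓ=1}^{m} C(k_0-1+ℓ, k_0-1) q^ℓ`. Each product
`∏_{j≤i}` then telescopes to the corresponding summand on the right.
-/

open PowerSeries Finset
open scoped Nat

theorem ZMod.natCast_choose_add_self_eq_one {m K : ℕ} (hK : Nat.Coprime m K !) :
    ((K + m).choose K : ZMod m) = 1 := by
  have hunit : IsUnit (K ! : ZMod m) := (ZMod.isUnit_iff_coprime _ _).2 hK.symm
  refine hunit.mul_left_cancel ?_
  have hasc := congrArg (Nat.cast : ℕ → ZMod m) (Nat.ascFactorial_eq_factorial_mul_choose m K)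
  rw [Nat.cast_mul, Nat.cast_ascFactorial, Nat.cast_add_one, ZMod.natCast_self, zero_add,
    ← Nat.cast_one, ← Nat.cast_ascFactorial, Nat.one_ascFactorial, add_comm] at hasc
  rw [mul_one, ← hasc]

theorem ZMod.natCast_choose_add_self_succ_eq_zero {m K : ℕ} (hK : Nat.Coprime m (K + 1)!) :
    ((K + m).choose (K + 1) : ZMod m) = 0 := by
  rw [ZMod.natCast_eq_zero_iff]
  refine hK.dvd_of_dvd_mul_left ?_
  rw [← Nat.descFactorial_eq_factorial_mul_choose, Nat.descFactorial_succ, Nat.add_sub_cancel_left]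
  exact dvd_mul_right _ _

theorem Finset.prod_range_succ_eq_mul_prod_Icc_of_mul_eq {M : Type*} [CommMonoid M]
    {a g t : ℕ → M} {A : M} (h0 : a 0 = A * g 1) (hstep : ∀ j, 1 ≤ j → g j * a j = g (j + 1) * t j)
    (i : ℕ) : ∏ j ∈ range (i + 1), a j = A * (g (i + 1) * ∏ j ∈ Icc 1 i, t j) := by
  induction i with
  | zero => simp [h0]
  | succ i ih =>
    rw [prod_range_succ, ih, prod_Icc_succ_top (by omega), mul_assoc A, mul_assoc (g (i + 1)),
      mul_comm _ (a (i + 1)), ← mul_assoc (g (i + 1)), hstep (i + 1) (by omega)]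
    simp only [mul_assoc, mul_comm (t (i + 1))]

section CommRing

variable {R : Type*} [CommRing R]

theorem one_sub_mul_sum_range_choose_succ (K n : ℕ) (Y : R) :
    (1 - Y) * ∑ ℓ ∈ range n, ((K + 1 + ℓ).choose (K + 1) : R) * Y ^ ℓ
      = ∑ ℓ ∈ range n, ((K + ℓ).choose K : R) * Y ^ ℓ - ((K + n).choose (K + 1) : R) * Y ^ n := by
  induction n with
  | zero => simp
  | succ n ih =>
    rw [sum_range_succ, sum_range_succ, mul_add, ih, add_right_comm K 1 n, ← Nat.add_assoc,
      Nat.choose_succ_succ' (K + n) K, Nat.cast_add, pow_succ]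
    ring

variable {m : ℕ} [Algebra (ZMod m) R]

theorem one_sub_pow_mul_sum_range_choose {K : ℕ} (hK : Nat.Coprime m K !) (Y : R) :
    (1 - Y) ^ (K + 1) * ∑ ℓ ∈ range m, ((K + ℓ).choose K : R) * Y ^ ℓ = 1 - Y ^ m := by
  induction K with
  | zero => simpa using mul_neg_geom_sum Y m
  | succ K ih =>
    have hK' : Nat.Coprime m K ! := hK.coprime_dvd_right (Nat.factorial_dvd_factorial K.le_succ)
    have hvanish : ((K + m).choose (K + 1) : R) = 0 := by
      rw [← map_natCast (algebraMap (ZMod m) R), ZMod.natCast_choose_add_self_succ_eq_zero hK,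
        map_zero]
    rw [pow_succ, mul_assoc, one_sub_mul_sum_range_choose_succ, hvanish, zero_mul, sub_zero, ih hK']

variable {g g' Y : R}

theorem pow_succ_eq_mul_sum_range_choose (hg : (1 - Y) * g = 1) (hg' : (1 - Y ^ m) * g' = 1)
    {K : ℕ} (hK : Nat.Coprime m K !) :
    g ^ (K + 1) = g' * ∑ ℓ ∈ range m, ((K + ℓ).choose K : R) * Y ^ ℓ := by
  have hpow : g ^ (K + 1) * (1 - Y) ^ (K + 1) = 1 := by rw [← mul_pow, mul_comm, hg, one_pow]
  linear_combination (-g ^ (K + 1)) * hg'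
    + g' * (∑ ℓ ∈ range m, ((K + ℓ).choose K : R) * Y ^ ℓ) * hpow
    - g' * g ^ (K + 1) * one_sub_pow_mul_sum_range_choose hK Y

theorem pow_succ_sub_one_eq_sum_Icc_choose_mul (hg : (1 - Y) * g = 1)
    (hg' : (1 - Y ^ m) * g' = 1) {K : ℕ} (hK : Nat.Coprime m K !) :
    g ^ (K + 1) - 1 = (∑ ℓ ∈ Icc 1 m, ((K + ℓ).choose K : R) * Y ^ ℓ) * g' := by
  have htop : ((K + m).choose K : R) = 1 := by
    rw [← map_natCast (algebraMap (ZMod m) R), ZMod.natCast_choose_add_self_eq_one hK, map_one]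
  have hsplit : ∑ ℓ ∈ Icc 1 m, ((K + ℓ).choose K : R) * Y ^ ℓ
      = ∑ ℓ ∈ range m, ((K + ℓ).choose K : R) * Y ^ ℓ - 1 + Y ^ m := by
    have h := sum_range_succ (fun ℓ ↦ ((K + ℓ).choose K : R) * Y ^ ℓ) m
    rw [range_eq_Ico, sum_eq_sum_Ico_succ_bot (by omega : 0 < m + 1), zero_add,
      Ico_add_one_right_eq_Icc, htop] at h
    simp only [add_zero, Nat.choose_self, Nat.cast_one, pow_zero, mul_one, one_mul] at h
    linear_combination h
  rw [hsplit, pow_succ_eq_mul_sum_range_choose hg hg' hK]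
  linear_combination hg'

theorem mul_pow_sub_one_eq_mul_sum_range_choose_sub_one (hg : (1 - Y) * g = 1)
    (hg' : (1 - Y ^ m) * g' = 1) {K : ℕ} (hK : Nat.Coprime m K !) :
    g * (g ^ K - 1) = g' * ∑ ℓ ∈ range m, (((K + ℓ).choose K : R) - 1) * Y ^ ℓ := by
  have h1 := pow_succ_eq_mul_sum_range_choose hg hg' hK
  have h0 := pow_succ_eq_mul_sum_range_choose hg hg' (K := 0) (Nat.coprime_one_right m)
  simp only [zero_add, Nat.choose_zero_right, Nat.cast_one, one_mul, pow_one] at h0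
  simp only [sub_mul, one_mul, sum_sub_distrib]
  linear_combination h1 - h0

end CommRing

/-- **Theorem 4 of the paper, finite form.**
Let `m ≥ 2` and `k₀, k₁, …` be positive integers with `m` coprime to `(k₀-1)!` and to
`k_j!` for `j ≥ 1`, and let `G r` denote the inverse of `1 - q^r` in `(ZMod m)⟦q⟧`.
Then for every `N ≥ 0`, in `(ZMod m)⟦q⟧` we have
`∑_{i=0}^{N} ∏_{j=0}^{i} (G_{m^j}^{k_j} - 1)
  = (∑_{ℓ₀=1}^{m} C(k₀-1+ℓ₀, k₀-1) q^{ℓ₀})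
    · ∑_{i=0}^{N} G_{m^{i+1}} · ∏_{j=1}^{i} (∑_{ℓ=0}^{m-1} (C(k_j+ℓ, k_j) - 1) q^{ℓ m^j})`. -/
theorem gapfree_genfun_expansion_mod (m : ℕ) (hm : 2 ≤ m) (k : ℕ → ℕ) (hk : ∀ j, 0 < k j)
    (h0 : Nat.Coprime m (Nat.factorial (k 0 - 1)))
    (hj : ∀ j, 1 ≤ j → Nat.Coprime m (Nat.factorial (k j)))
    (G : ℕ → PowerSeries (ZMod m)) (hG : ∀ r, 1 ≤ r → (1 - X ^ r) * G r = 1) (N : ℕ) :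
    ∑ i ∈ range (N + 1), ∏ j ∈ range (i + 1), ((G (m ^ j)) ^ k j - 1)
      = (∑ ℓ ∈ Icc 1 m, (PowerSeries.C (R := ZMod m)) ((k 0 - 1 + ℓ).choose (k 0 - 1) : ZMod m) * X ^ ℓ)
        * ∑ i ∈ range (N + 1), G (m ^ (i + 1))
            * ∏ j ∈ Icc 1 i, ∑ ℓ ∈ range m,
                (PowerSeries.C (R := ZMod m)) (((k j + ℓ).choose (k j) : ZMod m) - 1) * X ^ (ℓ * m ^ j) := by
  have hG' (j : ℕ) : (1 - (X ^ m ^ j) ^ m) * G (m ^ (j + 1)) = 1 := by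
    rw [← pow_mul, ← pow_succ]
    exact hG _ (Nat.one_le_pow _ _ (by omega))
  simp only [map_natCast, map_sub, map_one, pow_mul']
  rw [mul_sum]
  refine sum_congr rfl fun i _ ↦ prod_range_succ_eq_mul_prod_Icc_of_mul_eq
    (a := fun j ↦ G (m ^ j) ^ k j - 1) (g := fun j ↦ G (m ^ j)) ?_ (fun j hj1 ↦ ?_) i
  · have hX : (1 - X) * G 1 = 1 := by simpa using hG 1 le_rfl
    simpa [Nat.sub_add_cancel (hk 0)] using
      pow_succ_sub_one_eq_sum_Icc_choose_mul hX (by simpa using hG' 0) h0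
  · exact mul_pow_sub_one_eq_mul_sum_range_choose_sub_one (hG _ (Nat.one_le_pow _ _ (by omega)))
      (hG' j) (hj j hj1)
end

section
/- Fix m ≥ 2 and k = (k_0, k_1, ...). Let n ≥ 1 and let N be any integer with m^{N+1} > n. Then the number c_m^k(n) of k-coloured m-ary partitions of n without gaps equals the coefficient of q^n in the formal power series ∑_{i=0}^{N} ∏_{j=0}^{i} (G_{m^j}^{k_j} - 1) ∈ ℤ⟦q⟧, where G_r = ∑_{ℓ≥0} q^{rℓ} is the inverse of 1 - q^r in ℤ⟦q⟧. -/
open PowerSeries Finset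

/-- A coloured `m`-ary partition is *without gaps* if whenever a part `m^{j+1}` occurs
in some colour, a part `m^j` occurs in some (not necessarily the same) colour. -/
def WithoutGaps (c : ℕ × ℕ →₀ ℕ) : Prop :=
  ∀ j : ℕ, (∃ i, 0 < c (j + 1, i)) → ∃ i', 0 < c (j, i')

/-!
The series `G r` is the expansion `q ↦ q ^ r` of the geometric series, so `G (m ^ j) ^ k j - 1`
is the generating function of the nonzero rows `c.curry j = fun t => c (j, t)` of level `j`, a
row of size `e` having weight `m ^ j * e`. Hence the coefficient of `q ^ n` in
`∏ j ∈ s, (G (m ^ j) ^ k j - 1)` counts the coloured partitions of `n` whose set of occupied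
levels `c.curry.support` is exactly `s`. A partition of `n ≥ 1` has no gaps iff its occupied
levels form an initial segment `{0, …, i}`, and then `m ^ i ≤ n < m ^ (N + 1)` forces `i ≤ N`.
-/

namespace PowerSeries

variable {R : Type*}

theorem eq_expand_mk_one_of_one_sub_X_pow_mul_eq_one_s9 [CommRing R] {r : ℕ} (hr : r ≠ 0)
    {G : R⟦X⟧} (hG : (1 - X ^ r) * G = 1) : G = expand r hr (mk 1) := by
  have hE : (1 - X ^ r) * expand r hr (mk 1 : R⟦X⟧) = 1 := by
    simpa [mul_comm] using congrArg (expand r hr) (mk_one_mul_one_sub_eq_one R)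
  calc G = G * ((1 - X ^ r) * expand r hr (mk 1)) := by rw [hE, mul_one]
    _ = expand r hr (mk 1) := by rw [← mul_assoc, mul_comm G, hG, one_mul]

theorem coeff_mk_one_pow [CommSemiring R] (k e : ℕ) :
    coeff e (mk 1 ^ k : R⟦X⟧) = #((range k).finsuppAntidiag e) := by
  rw [← card_range k, ← prod_const, coeff_prod]
  simp

theorem coeff_mk_one_pow_sub_one [CommRing R] (k e : ℕ) :
    coeff e (mk 1 ^ k - 1 : R⟦X⟧) = #(((range k).finsuppAntidiag e).erase 0) := by
  rw [map_sub, coeff_mk_one_pow, coeff_one, card_erase_eq_ite]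
  by_cases he : e = 0
  · simp [he]
  · simp [he, Ne.symm he]

theorem coeff_prod_eq_card_sigma [CommSemiring R] {ι β : Type*} [DecidableEq ι] [Zero β]
    (s : Finset ι) (f : ι → R⟦X⟧) (T : ι → ℕ → Finset β)
    (hT : ∀ j ∈ s, ∀ d, coeff d (f j) = #(T j d)) (n : ℕ) :
    coeff n (∏ j ∈ s, f j) =
      #((s.finsuppAntidiag n).sigma fun l => s.finsupp fun j => T j (l j)) := by
  rw [coeff_prod, card_sigma, Nat.cast_sum]
  refine sum_congr rfl fun l _ => ?_
  rw [card_finsupp, Nat.cast_prod]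
  exact prod_congr rfl fun j hj => hT j hj (l j)

end PowerSeries

theorem Finset.exists_eq_range_iff {S : Finset ℕ} :
    (∃ a, S = range a) ↔ ∀ j, j + 1 ∈ S → j ∈ S := by
  refine ⟨?_, fun h => ⟨S.sup (· + 1), ?_⟩⟩
  · rintro ⟨a, rfl⟩ j
    simp only [mem_range]
    omega
  · ext j
    refine ⟨fun hj => mem_range.2 (le_sup (f := (· + 1)) hj), fun hj => ?_⟩
    obtain ⟨b, hb, hjb⟩ := (Finset.lt_sup_iff).1 (mem_range.1 hj)
    exact Nat.decreasingInduction (fun i _ hi => h i hi) hb (Nat.le_of_lt_succ hjb)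

namespace ColouredMaryPartition

open Finsupp

variable {m : ℕ} {k : ℕ → ℕ} {n : ℕ}

theorem isColouredMaryPartition_iff_curry {c : ℕ × ℕ →₀ ℕ} :
    IsColouredMaryPartition m k n c ↔
      (∀ j, (c.curry j).support ⊆ range (k j)) ∧
        c.curry.sum (fun j r => m ^ j * r.degree) = n := by
  have hsum : c.curry.sum (fun j r => m ^ j * r.degree) = c.sum (fun p v => v * m ^ p.1) := by
    rw [← sum_curry_index c fun j _ v => v * m ^ j]
    simp only [Finsupp.sum, degree_apply, Finset.mul_sum, mul_comm]
  simp only [IsColouredMaryPartition, hsum, subset_iff, mem_support_iff, curry_apply, mem_range]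
  exact and_congr_left' (forall_congr' fun j => forall_congr' fun i => by omega)

theorem withoutGaps_iff_curry {c : ℕ × ℕ →₀ ℕ} :
    WithoutGaps c ↔ ∀ j, j + 1 ∈ c.curry.support → j ∈ c.curry.support := by
  simp only [WithoutGaps, mem_support_iff, Ne, DFunLike.ext_iff, curry_apply, Finsupp.coe_zero,
    Pi.zero_apply, not_forall, Nat.pos_iff_ne_zero]

variable (m k) in
def rowsOfWeight (j d : ℕ) : Finset (ℕ →₀ ℕ) :=
  if m ^ j ∣ d then ((range (k j)).finsuppAntidiag (d / m ^ j)).erase 0 else ∅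

theorem mem_rowsOfWeight (hm : 0 < m) {j d : ℕ} {r : ℕ →₀ ℕ} :
    r ∈ rowsOfWeight m k j d ↔ r ≠ 0 ∧ r.support ⊆ range (k j) ∧ m ^ j * r.degree = d := by
  have hmj : 0 < m ^ j := pow_pos hm j
  unfold rowsOfWeight
  split_ifs with hd
  · have hdeg : r.degree = d / m ^ j ↔ m ^ j * r.degree = d := by
      rw [eq_comm, Nat.div_eq_iff_eq_mul_left hmj hd, mul_comm, eq_comm]
    rw [mem_erase, mem_finsuppAntidiag', and_comm (a := _ = _)]
    exact and_congr_right' (and_congr_right' hdeg)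
  · simp only [Finset.notMem_empty, false_iff]
    rintro ⟨-, -, rfl⟩
    exact hd (dvd_mul_right _ _)

variable (m) in
noncomputable def levelWeights (rows : ℕ →₀ ℕ →₀ ℕ) : ℕ →₀ ℕ :=
  onFinset rows.support (fun j => m ^ j * (rows j).degree) fun j hj =>
    mem_support_iff.2 fun h => hj (by rw [h, map_zero, mul_zero])

variable (m k) in
noncomputable def rowFamilies (s : Finset ℕ) (n : ℕ) : Finset ((_ : ℕ →₀ ℕ) × (ℕ →₀ ℕ →₀ ℕ)) :=
  (s.finsuppAntidiag n).sigma fun l => s.finsupp fun j => rowsOfWeight m k j (l j)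

theorem mk_mem_rowFamilies_iff (hm : 0 < m) {s : Finset ℕ} {l : ℕ →₀ ℕ} {rows : ℕ →₀ ℕ →₀ ℕ} :
    ⟨l, rows⟩ ∈ rowFamilies m k s n ↔
      ((∀ j, (rows j).support ⊆ range (k j)) ∧ rows.sum (fun j r => m ^ j * r.degree) = n ∧
        rows.support = s) ∧ l = levelWeights m rows := by
  simp only [rowFamilies, mem_sigma, mem_finsuppAntidiag, mem_finsupp_iff, mem_rowsOfWeight hm]
  constructor
  · rintro ⟨⟨hl, hls⟩, hs, hrows⟩
    have hsupp : rows.support = s :=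
      subset_antisymm hs fun j hj => mem_support_iff.2 (hrows j hj).1
    have hlw : l = levelWeights m rows := by
      ext j
      by_cases hj : j ∈ s
      · exact (hrows j hj).2.2.symm
      · rw [notMem_support_iff.1 (mt (hls ·) hj), levelWeights, onFinset_apply,
          notMem_support_iff.1 (hsupp ▸ hj), map_zero, mul_zero]
    refine ⟨⟨fun j => ?_, ?_, hsupp⟩, hlw⟩
    · by_cases hj : j ∈ s
      · exact (hrows j hj).2.1
      · simp [notMem_support_iff.1 (hsupp ▸ hj)]
    · rw [Finsupp.sum, hsupp, ← hl]
      exact sum_congr rfl fun j hj => (hrows j hj).2.2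
  · rintro ⟨⟨hcol, hsum, rfl⟩, rfl⟩
    exact ⟨⟨hsum, support_onFinset_subset⟩, subset_rfl,
      fun j hj => ⟨mem_support_iff.1 hj, hcol j, rfl⟩⟩

variable (m k) in
noncomputable def partitionsWithLevels (s : Finset ℕ) (n : ℕ) : Finset (ℕ × ℕ →₀ ℕ) :=
  (rowFamilies m k s n).image fun x => x.2.uncurry

theorem mem_partitionsWithLevels (hm : 0 < m) {s : Finset ℕ} {c : ℕ × ℕ →₀ ℕ} :
    c ∈ partitionsWithLevels m k s n ↔ IsColouredMaryPartition m k n c ∧ c.curry.support = s := by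
  rw [isColouredMaryPartition_iff_curry, and_assoc]
  constructor
  · intro h
    obtain ⟨⟨l, rows⟩, hx, rfl⟩ := mem_image.1 h
    rw [curry_uncurry]
    exact ((mk_mem_rowFamilies_iff hm).1 hx).1
  · intro h
    exact mem_image.2 ⟨⟨levelWeights m c.curry, c.curry⟩, (mk_mem_rowFamilies_iff hm).2 ⟨h, rfl⟩,
      uncurry_curry c⟩

theorem card_partitionsWithLevels (hm : 0 < m) (s : Finset ℕ) (n : ℕ) :
    #(partitionsWithLevels m k s n) = #(rowFamilies m k s n) := by
  refine card_image_of_injOn fun ⟨l, rows⟩ hx ⟨l', rows'⟩ hx' h => ?_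
  obtain rfl : rows = rows' := by simpa using congrArg Finsupp.curry h
  rw [((mk_mem_rowFamilies_iff hm).1 hx).2, ((mk_mem_rowFamilies_iff hm).1 hx').2]

theorem coeff_prod_expand_eq_card_partitionsWithLevels {R : Type*} [CommRing R] (hm : 0 < m)
    (s : Finset ℕ) (n : ℕ) :
    coeff n (∏ j ∈ s, expand (m ^ j) (pow_pos hm j).ne' (PowerSeries.mk 1 ^ k j - 1 : R⟦X⟧)) =
      #(partitionsWithLevels m k s n) := by
  rw [card_partitionsWithLevels hm, rowFamilies]
  refine coeff_prod_eq_card_sigma s _ _ (fun j _ d => ?_) n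
  rw [coeff_expand, rowsOfWeight]
  split_ifs <;> simp [coeff_mk_one_pow_sub_one]

theorem pow_le_of_mem_curry_support {c : ℕ × ℕ →₀ ℕ} (hc : IsColouredMaryPartition m k n c)
    {j : ℕ} (hj : j ∈ c.curry.support) : m ^ j ≤ n := by
  rw [isColouredMaryPartition_iff_curry] at hc
  calc m ^ j ≤ m ^ j * (c.curry j).degree :=
        Nat.le_mul_of_pos_right _ (Nat.pos_of_ne_zero
          ((degree_eq_zero_iff _).not.2 (mem_support_iff.1 hj)))
    _ ≤ c.curry.sum (fun j r => m ^ j * r.degree) :=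
        single_le_sum (f := fun j => m ^ j * (c.curry j).degree) (fun _ _ => Nat.zero_le _) hj
    _ = n := hc.2

theorem withoutGaps_iff_exists_curry_support_eq_range (hm : 2 ≤ m) (hn : n ≠ 0) {N : ℕ}
    (hN : n < m ^ (N + 1)) {c : ℕ × ℕ →₀ ℕ} (hc : IsColouredMaryPartition m k n c) :
    WithoutGaps c ↔ ∃ i < N + 1, c.curry.support = range (i + 1) := by
  rw [withoutGaps_iff_curry, ← exists_eq_range_iff]
  constructor
  · rintro ⟨a, ha⟩
    obtain ⟨i, rfl⟩ : ∃ i, a = i + 1 := Nat.exists_eq_succ_of_ne_zero fun ha0 => hn <| by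
      rw [ha0, range_zero, support_eq_empty] at ha
      rw [← (isColouredMaryPartition_iff_curry.1 hc).2, ha, sum_zero_index]
    have : m ^ i < m ^ (N + 1) :=
      (pow_le_of_mem_curry_support hc (ha ▸ self_mem_range_succ i)).trans_lt hN
    exact ⟨i, (Nat.pow_lt_pow_iff_right (by omega)).1 this, ha⟩
  · rintro ⟨i, -, ha⟩
    exact ⟨i + 1, ha⟩

theorem disjoint_partitionsWithLevels (hm : 0 < m) {s t : Finset ℕ} (hst : s ≠ t) :
    Disjoint (partitionsWithLevels m k s n) (partitionsWithLevels m k t n) :=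
  disjoint_left.2 fun _ hs ht =>
    hst (((mem_partitionsWithLevels hm).1 hs).2.symm.trans ((mem_partitionsWithLevels hm).1 ht).2)

theorem card_withoutGaps_eq_sum_card_partitionsWithLevels (hm : 2 ≤ m) (hn : n ≠ 0) {N : ℕ}
    (hN : n < m ^ (N + 1)) :
    Nat.card {c : ℕ × ℕ →₀ ℕ // IsColouredMaryPartition m k n c ∧ WithoutGaps c} =
      ∑ i ∈ range (N + 1), #(partitionsWithLevels m k (range (i + 1)) n) := by
  have hm0 : 0 < m := by omega
  have hdisj : (range (N + 1) : Set ℕ).PairwiseDisjoint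
      fun i => partitionsWithLevels m k (range (i + 1)) n :=
    fun i _ i' _ hii' => disjoint_partitionsWithLevels hm0 fun h =>
      hii' (by simpa using congrArg card h)
  rw [← card_biUnion hdisj, ← Nat.card_eq_finsetCard]
  refine Nat.card_congr (Equiv.subtypeEquivRight fun c => ?_)
  simp only [mem_biUnion, mem_range, mem_partitionsWithLevels hm0]
  refine ⟨fun ⟨hc, hgaps⟩ => ?_, fun ⟨i, hi, hc, hlevels⟩ =>
    ⟨hc, (withoutGaps_iff_exists_curry_support_eq_range hm hn hN hc).2 ⟨i, hi, hlevels⟩⟩⟩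
  obtain ⟨i, hi, hlevels⟩ := (withoutGaps_iff_exists_curry_support_eq_range hm hn hN hc).1 hgaps
  exact ⟨i, hi, hc, hlevels⟩

end ColouredMaryPartition

theorem gapfree_count_eq_coeff_general (m : ℕ) (hm : 2 ≤ m) (k : ℕ → ℕ)
    (G : ℕ → PowerSeries ℤ) (hG : ∀ r, 1 ≤ r → (1 - X ^ r) * G r = 1)
    (n N : ℕ) (hn : 1 ≤ n) (hN : n < m ^ (N + 1)) :
    (Nat.card {c : ℕ × ℕ →₀ ℕ // IsColouredMaryPartition m k n c ∧ WithoutGaps c} : ℤ)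
      = PowerSeries.coeff (R := ℤ) n
          (∑ i ∈ range (N + 1), ∏ j ∈ range (i + 1), ((G (m ^ j)) ^ k j - 1)) := by
  have hm0 : 0 < m := by omega
  have hG_expand (j : ℕ) :
      G (m ^ j) ^ k j - 1 = expand (m ^ j) (pow_pos hm0 j).ne' (PowerSeries.mk 1 ^ k j - 1) := by
    rw [PowerSeries.eq_expand_mk_one_of_one_sub_X_pow_mul_eq_one_s9 _ (hG _ (pow_pos hm0 j)), map_sub,
      map_pow, map_one]
  simp only [hG_expand, map_sum,
    ColouredMaryPartition.coeff_prod_expand_eq_card_partitionsWithLevels hm0]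
  rw [ColouredMaryPartition.card_withoutGaps_eq_sum_card_partitionsWithLevels hm (by omega) hN,
    Nat.cast_sum]

/-- Fix `m ≥ 2` and positive `k₀, k₁, …`.  For `n ≥ 1` and any `N` with
`m^{N+1} > n`, the number `c_m^k(n)` of `k`-coloured `m`-ary partitions of `n` without gaps
equals the coefficient of `q^n` in `∑_{i=0}^{N} ∏_{j=0}^{i} (G_{m^j}^{k_j} - 1) ∈ ℤ⟦q⟧`,
where `G r` is the inverse of `1 - q^r` in `ℤ⟦q⟧`. -/
theorem gapfree_count_eq_coeff (m : ℕ) (hm : 2 ≤ m) (k : ℕ → ℕ) (hk : ∀ j, 0 < k j)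
    (G : ℕ → PowerSeries ℤ) (hG : ∀ r, 1 ≤ r → (1 - X ^ r) * G r = 1)
    (n N : ℕ) (hn : 1 ≤ n) (hN : n < m ^ (N + 1)) :
    (Nat.card {c : ℕ × ℕ →₀ ℕ // IsColouredMaryPartition m k n c ∧ WithoutGaps c} : ℤ)
      = PowerSeries.coeff (R := ℤ) n
          (∑ i ∈ range (N + 1), ∏ j ∈ range (i + 1), ((G (m ^ j)) ^ k j - 1)) :=
  gapfree_count_eq_coeff_general m hm k G hG n N hn hN
end

section
/- Let m ≥ 2 and let n ≥ 1 be divisible by m, with base-m representation n = d_s m^s + ... + d_t m^t where 1 ≤ s ≤ t, 1 ≤ d_s ≤ m-1, and 0 ≤ d_{s+1}, ..., d_t ≤ m-1. Then for every d_0 with 0 ≤ d_0 ≤ m-1, the number c_m(n - d_0) of m-ary partitions of n - d_0 without gaps satisfies c_m(n - d_0) ≡ ε_s + (-1)^{s-1} (d_s - 1) · ∑_{i=s}^{t} ∏_{j=s+1}^{i} d_j (mod m), where ε_s = 0 if s is even and ε_s = 1 if s is odd. -/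
open Finset

/-- An `m`-ary partition of `n`: a finitely supported function `c : ℕ →₀ ℕ`, where
`c j` is the multiplicity of the part `m^j`, with total sum `∑ c j · m^j = n`. -/
def IsMaryPartition (m : ℕ) (n : ℕ) (c : ℕ →₀ ℕ) : Prop :=
  c.sum (fun j v => v * m ^ j) = n

/-- An `m`-ary partition is *without gaps* if `m^j` occurs as a part whenever `m^{j+1}`
occurs as a part. -/
def MaryWithoutGaps (c : ℕ →₀ ℕ) : Prop :=
  ∀ j : ℕ, 0 < c (j + 1) → 0 < c j

/-!
Removing the parts equal to `1` from a gap-free `m`-ary partition of `m * Q + r` with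
`1 ≤ r ≤ m` and dividing the remaining parts by `m` is a bijection onto the gap-free partitions
of the numbers `q ≤ Q`, so `c_m(m * Q + r) = S(Q)` for the partial sums
`S(N) = ∑_{q ≤ N} c_m(q)`.
Summing this, `S(m * Q + u) = S(m * Q) + u * S(Q)` for `u ≤ m` and `S(m * Q) ≡ 1 (mod m)`, so
`S(m * Q + u) ≡ 1 + u * S(Q)`. Hence `S` of a number is a Horner-type expression in its base-`m`
digits, each trailing digit `m - 1` acts as `x ↦ 1 - x` (which produces `ε_s` and the sign), and
`c_m(n - d₀) = S(n / m - 1)`.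
-/

@[to_additive]
lemma Finset.prod_Icc_add_eq_prod_range {M : Type*} [CommMonoid M] (f : ℕ → M) (a k : ℕ) :
    ∏ j ∈ Icc a (a + k), f j = ∏ i ∈ range (k + 1), f (a + i) := by
  rw [← Ico_add_one_right_eq_Icc, prod_Ico_eq_prod_range, add_assoc, Nat.add_sub_cancel_left]

namespace MaryPartition

noncomputable def cons (a : ℕ) (c : ℕ →₀ ℕ) : ℕ →₀ ℕ :=
  Finsupp.single 0 a + Finsupp.embDomain ⟨Nat.succ, Nat.succ_injective⟩ c

noncomputable def tail (c : ℕ →₀ ℕ) : ℕ →₀ ℕ :=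
  Finsupp.comapDomain Nat.succ c Nat.succ_injective.injOn

@[simp] lemma tail_apply (c : ℕ →₀ ℕ) (j : ℕ) : tail c j = c (j + 1) := rfl

@[simp] lemma cons_apply_zero (a : ℕ) (c : ℕ →₀ ℕ) : cons a c 0 = a := by
  rw [cons, Finsupp.add_apply, Finsupp.single_eq_same, Finsupp.embDomain_of_notMem_range,
    add_zero]
  rintro ⟨j, hj⟩
  exact Nat.succ_ne_zero j hj

@[simp] lemma cons_apply_succ (a : ℕ) (c : ℕ →₀ ℕ) (j : ℕ) :
    cons a c (j + 1) = c j := by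
  rw [cons, Finsupp.add_apply, Finsupp.single_eq_of_ne (Nat.succ_ne_zero j), zero_add]
  exact Finsupp.embDomain_apply_self ⟨Nat.succ, Nat.succ_injective⟩ c j

@[simp] lemma tail_cons (a : ℕ) (c : ℕ →₀ ℕ) : tail (cons a c) = c := by
  ext j
  simp

lemma cons_tail (c : ℕ →₀ ℕ) : cons (c 0) (tail c) = c := by
  ext (_ | j) <;> simp

lemma sum_cons (m a : ℕ) (c : ℕ →₀ ℕ) :
    (cons a c).sum (fun j v => v * m ^ j) = a + m * c.sum (fun j v => v * m ^ j) := by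
  rw [cons, Finsupp.sum_add_index' (fun _ => zero_mul _) (fun _ _ _ => add_mul _ _ _),
    Finsupp.sum_single_index (zero_mul _), Finsupp.sum_embDomain, Finsupp.mul_sum]
  simp only [Function.Embedding.coeFn_mk, pow_zero, mul_one, pow_succ]
  congr 1
  exact Finsupp.sum_congr fun j _ => by ring

lemma sum_eq_apply_zero_add (m : ℕ) (c : ℕ →₀ ℕ) :
    c.sum (fun j v => v * m ^ j) = c 0 + m * (tail c).sum (fun j v => v * m ^ j) := by
  conv_lhs => rw [← cons_tail c]
  exact sum_cons m _ _

lemma maryWithoutGaps_tail {c : ℕ →₀ ℕ} (h : MaryWithoutGaps c) :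
    MaryWithoutGaps (tail c) :=
  fun j => h (j + 1)

lemma maryWithoutGaps_cons {a : ℕ} {c : ℕ →₀ ℕ} (ha : 0 < a) (h : MaryWithoutGaps c) :
    MaryWithoutGaps (cons a c) := by
  rintro (_ | j) hj
  · simpa using ha
  · simpa using h j (by simpa using hj)

lemma eq_zero_of_maryWithoutGaps {c : ℕ →₀ ℕ} (h : MaryWithoutGaps c) (h0 : c 0 = 0) :
    c = 0 := by
  ext j
  induction j with
  | zero => exact h0
  | succ j ih => by_contra hj; exact absurd (h j (Nat.pos_of_ne_zero hj)) (by simp [ih])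

lemma isMaryPartition_zero_iff {m : ℕ} (hm : 0 < m) {c : ℕ →₀ ℕ} :
    IsMaryPartition m 0 c ↔ c = 0 := by
  refine ⟨fun h => ?_, fun h => by simp [h, IsMaryPartition]⟩
  ext j
  by_contra hj
  exact hj (by simpa [hm.ne'] using sum_eq_zero_iff.mp h j (Finsupp.mem_support_iff.mpr hj))

abbrev GapfreePartition (m n : ℕ) : Type :=
  {c : ℕ →₀ ℕ // IsMaryPartition m n c ∧ MaryWithoutGaps c}

noncomputable def gapfreeCount (m n : ℕ) : ℕ := Nat.card (GapfreePartition m n)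

noncomputable def gapfreePartialSum (m N : ℕ) : ℕ := ∑ q ∈ range (N + 1), gapfreeCount m q

lemma gapfreeCount_zero {m : ℕ} (hm : 0 < m) : gapfreeCount m 0 = 1 := by
  rw [gapfreeCount, Nat.card_eq_one_iff_exists]
  refine ⟨⟨0, (isMaryPartition_zero_iff hm).mpr rfl, fun j hj => by simp at hj⟩, ?_⟩
  exact fun c => Subtype.ext ((isMaryPartition_zero_iff hm).mp c.2.1)

lemma apply_zero_pos_of_maryWithoutGaps {m n : ℕ} {c : ℕ →₀ ℕ} (h : MaryWithoutGaps c)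
    (hc : IsMaryPartition m n c) (hn : 0 < n) : 0 < c 0 := by
  refine Nat.pos_of_ne_zero fun h0 => hn.ne' ?_
  rw [← hc, eq_zero_of_maryWithoutGaps h h0]
  exact Finsupp.sum_zero_index

noncomputable def gapfreeEquivSigma {m Q r : ℕ} (hr : 0 < r) (hrm : r ≤ m) :
    GapfreePartition m (m * Q + r) ≃ Σ q : Fin (Q + 1), GapfreePartition m q where
  toFun c := ⟨⟨(tail c.1).sum (fun j v => v * m ^ j), by
      have hsum := sum_eq_apply_zero_add m c.1
      have hpos := apply_zero_pos_of_maryWithoutGaps c.2.2 c.2.1 (by omega)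
      rw [c.2.1] at hsum
      refine Nat.lt_of_mul_lt_mul_left (a := m) ?_
      rw [mul_add, mul_one]
      omega⟩, tail c.1, rfl, maryWithoutGaps_tail c.2.2⟩
  invFun qc := ⟨cons (m * Q + r - m * qc.1) qc.2.1, by
      have : m * qc.1 ≤ m * Q := Nat.mul_le_mul_left m (Nat.lt_succ_iff.mp qc.1.2)
      refine ⟨?_, maryWithoutGaps_cons (by omega) qc.2.2.2⟩
      rw [IsMaryPartition, sum_cons, qc.2.2.1]
      omega⟩
  left_inv c := by
    have hsum := sum_eq_apply_zero_add m c.1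
    rw [c.2.1] at hsum
    refine Subtype.ext ?_
    conv_rhs => rw [← cons_tail c.1]
    exact congrArg (cons · _) (Nat.sub_eq_of_eq_add hsum)
  right_inv qc :=
    Sigma.subtype_ext (Fin.ext (by simp only [tail_cons]; exact qc.2.2.1)) (tail_cons _ _)

lemma finite_gapfreePartition {m : ℕ} (hm : 0 < m) (n : ℕ) : Finite (GapfreePartition m n) := by
  induction n using Nat.strong_induction_on with
  | _ n ih =>
    rcases n.eq_zero_or_pos with rfl | hn
    · exact Nat.finite_of_card_ne_zero (by rw [← gapfreeCount, gapfreeCount_zero hm]; norm_num)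
    · obtain ⟨Q, r, hr, hrm, rfl⟩ : ∃ Q r, 0 < r ∧ r ≤ m ∧ n = m * Q + r :=
        ⟨(n - 1) / m, (n - 1) % m + 1, by omega, Nat.mod_lt _ hm, by
          have := Nat.div_add_mod (n - 1) m; omega⟩
      have hQ : ∀ q : Fin (Q + 1), Finite (GapfreePartition m q) := fun q =>
        ih q (by have := Nat.le_mul_of_pos_left Q hm; omega)
      exact Finite.of_equiv _ (gapfreeEquivSigma hr hrm).symm

lemma gapfreeCount_mul_add {m Q r : ℕ} (hr : 0 < r) (hrm : r ≤ m) :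
    gapfreeCount m (m * Q + r) = gapfreePartialSum m Q := by
  have := finite_gapfreePartition (m := m) (by omega)
  rw [gapfreeCount, Nat.card_congr (gapfreeEquivSigma hr hrm), Nat.card_sigma, gapfreePartialSum,
    ← Fin.sum_univ_eq_sum_range]
  rfl

lemma gapfreeCount_mul_sub {m M d₀ : ℕ} (hM : 0 < M) (hd₀ : d₀ < m) :
    gapfreeCount m (m * M - d₀) = gapfreePartialSum m (M - 1) := by
  have : m * M - d₀ = m * (M - 1) + (m - d₀) := by
    obtain ⟨M, rfl⟩ := Nat.exists_eq_add_of_lt hM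
    simp only [Nat.zero_add, Nat.add_sub_cancel, mul_add, mul_one]
    omega
  rw [this, gapfreeCount_mul_add (by omega) (by omega)]

lemma gapfreePartialSum_succ (m N : ℕ) :
    gapfreePartialSum m (N + 1) = gapfreePartialSum m N + gapfreeCount m (N + 1) :=
  sum_range_succ _ _

lemma gapfreePartialSum_mul_add (m Q : ℕ) {u : ℕ} (hu : u ≤ m) :
    gapfreePartialSum m (m * Q + u)
      = gapfreePartialSum m (m * Q) + u * gapfreePartialSum m Q := by
  induction u with
  | zero => simp
  | succ u ih =>
    rw [← add_assoc, gapfreePartialSum_succ, ih (by omega), add_assoc (m * Q) u 1,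
      gapfreeCount_mul_add u.succ_pos hu]
    ring

lemma gapfreePartialSum_mul_cast {m : ℕ} (hm : 0 < m) (Q : ℕ) :
    (gapfreePartialSum m (m * Q) : ZMod m) = 1 := by
  induction Q with
  | zero => simp [gapfreePartialSum, gapfreeCount_zero hm]
  | succ Q ih =>
    rw [mul_add_one, gapfreePartialSum_mul_add m Q le_rfl]
    push_cast
    rw [ih, ZMod.natCast_self, zero_mul, add_zero]

lemma gapfreePartialSum_mul_add_cast {m : ℕ} (hm : 0 < m) (Q : ℕ) {u : ℕ} (hu : u ≤ m) :
    (gapfreePartialSum m (m * Q + u) : ZMod m) = 1 + u * gapfreePartialSum m Q := by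
  rw [gapfreePartialSum_mul_add m Q hu]
  push_cast
  rw [gapfreePartialSum_mul_cast hm]

lemma gapfreePartialSum_digits_cast {m : ℕ} (hm : 0 < m) (k : ℕ) (e : ℕ → ℕ)
    (he : ∀ i < k, e i ≤ m) :
    (gapfreePartialSum m (∑ i ∈ range k, e i * m ^ i) : ZMod m)
      = ∑ a ∈ range (k + 1), ∏ b ∈ range a, (e b : ZMod m) := by
  induction k generalizing e with
  | zero => simp [gapfreePartialSum, gapfreeCount_zero hm]
  | succ k ih =>
    have hsplit :
        ∑ i ∈ range (k + 1), e i * m ^ i = m * ∑ i ∈ range k, e (i + 1) * m ^ i + e 0 := by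
      rw [sum_range_succ', mul_sum]
      simp only [pow_succ, pow_zero, mul_one]
      congr 1
      exact sum_congr rfl fun i _ => by ring
    rw [hsplit, gapfreePartialSum_mul_add_cast hm _ (he 0 k.succ_pos),
      ih _ fun i hi => he (i + 1) (by omega), sum_range_succ' _ (k + 1), mul_sum]
    simp only [prod_range_succ', prod_range_zero]
    rw [add_comm]
    exact congrArg (· + 1) (sum_congr rfl fun a _ => mul_comm _ _)

lemma gapfreePartialSum_pow_mul_sub_one_cast {m : ℕ} (hm : 0 < m) (r : ℕ) {V : ℕ}
    (hV : 0 < V) :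
    (gapfreePartialSum m (m ^ r * V - 1) : ZMod m)
      = if Even r then (gapfreePartialSum m (V - 1) : ZMod m)
        else 1 - gapfreePartialSum m (V - 1) := by
  induction r with
  | zero => simp
  | succ r ih =>
    obtain ⟨x, hx⟩ := Nat.exists_eq_add_of_lt (Nat.mul_pos (Nat.pow_pos hm) hV)
    have hsplit : m ^ (r + 1) * V - 1 = m * (m ^ r * V - 1) + (m - 1) := by
      rw [pow_succ', mul_assoc, hx, zero_add, Nat.add_sub_cancel, mul_add_one]
      omega
    rw [hsplit, gapfreePartialSum_mul_add_cast hm _ (Nat.sub_le m 1), ih, Nat.cast_pred hm,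
      ZMod.natCast_self]
    by_cases h : Even r
    · simp [h, Nat.even_add_one, sub_eq_add_neg]
    · simp [h, Nat.even_add_one]

end MaryPartition

open MaryPartition

theorem mary_gapfree_count_mod_general (m : ℕ)
    (n s t : ℕ) (hs : 1 ≤ s) (hst : s ≤ t) (d : ℕ → ℕ)
    (hds : 1 ≤ d s ∧ d s ≤ m - 1) (hd : ∀ j, s + 1 ≤ j → j ≤ t → d j ≤ m - 1)
    (hn : n = ∑ j ∈ Icc s t, d j * m ^ j)
    (d₀ : ℕ) (hd₀ : d₀ ≤ m - 1) :
    (Nat.card {c : ℕ →₀ ℕ // IsMaryPartition m (n - d₀) c ∧ MaryWithoutGaps c} : ℤ)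
      ≡ (if Even s then 0 else 1)
          + (-1) ^ (s - 1) * ((d s : ℤ) - 1) * ∑ i ∈ Icc s t, ∏ j ∈ Icc (s + 1) i, (d j : ℤ)
        [ZMOD (m : ℤ)] := by
  have hm : 0 < m := by omega
  obtain ⟨r, rfl⟩ := Nat.exists_eq_add_of_le' hs
  obtain ⟨k, rfl⟩ := Nat.exists_eq_add_of_le hst
  set W := ∑ i ∈ range k, d (r + 2 + i) * m ^ i
  have hnW : n = m * (m ^ r * (m * W + d (r + 1))) := by
    rw [hn, sum_Icc_add_eq_sum_range, sum_range_succ', mul_add, mul_add, mul_sum, mul_sum, mul_sum]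
    congr 1
    · refine sum_congr rfl fun i _ => ?_
      rw [show r + 1 + (i + 1) = r + 2 + i by omega]
      ring
    · ring
  have hW : (gapfreePartialSum m W : ZMod m)
      = ∑ i ∈ Icc (r + 1) (r + 1 + k), ∏ j ∈ Icc (r + 1 + 1) i, (d j : ZMod m) := by
    rw [gapfreePartialSum_digits_cast hm k _ fun i hi => by
      have := hd (r + 2 + i) (by omega) (by omega); omega, sum_Icc_add_eq_sum_range]
    refine sum_congr rfl fun a _ => ?_
    rw [← Ico_add_one_right_eq_Icc, prod_Ico_eq_prod_range,
      show r + 1 + a + 1 - (r + 1 + 1) = a by omega]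
  have hV : 0 < m * W + d (r + 1) := by omega
  rw [← ZMod.intCast_eq_intCast_iff]
  push_cast
  rw [show Nat.card _ = gapfreeCount m (n - d₀) from rfl, hnW,
    gapfreeCount_mul_sub (by positivity) (by omega), gapfreePartialSum_pow_mul_sub_one_cast hm r hV,
    show m * W + d (r + 1) - 1 = m * W + (d (r + 1) - 1) by omega,
    gapfreePartialSum_mul_add_cast hm _ (by omega), hW, Nat.cast_sub hds.1]
  rcases Nat.even_or_odd r with h | h
  · rw [if_pos h, if_neg (Nat.not_even_iff_odd.mpr h.add_one), h.neg_one_pow]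
    ring
  · rw [if_neg (Nat.not_even_iff_odd.mpr h), if_pos h.add_one, h.neg_one_pow]
    ring

/-- **Andrews–Fraenkel–Sellers, Theorem 2.1 of [afs16].**
Let `m ≥ 2` and let `n ≥ 1` be divisible by `m`, with base-`m` representation
`n = d_s m^s + ⋯ + d_t m^t` where `1 ≤ s ≤ t`, `1 ≤ d_s ≤ m-1` and `0 ≤ d_j ≤ m-1` for
`s+1 ≤ j ≤ t`.  Then for all `0 ≤ d₀ ≤ m-1`, the number `c_m(n - d₀)` of `m`-ary partitions
of `n - d₀` without gaps satisfies
`c_m(n - d₀) ≡ ε_s + (-1)^{s-1} (d_s - 1) · ∑_{i=s}^{t} ∏_{j=s+1}^{i} d_j (mod m)`,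
where `ε_s = 0` for even `s` and `ε_s = 1` for odd `s`. -/
theorem mary_gapfree_count_mod (m : ℕ) (hm : 2 ≤ m)
    (n s t : ℕ) (hs : 1 ≤ s) (hst : s ≤ t) (d : ℕ → ℕ)
    (hds : 1 ≤ d s ∧ d s ≤ m - 1) (hd : ∀ j, s + 1 ≤ j → j ≤ t → d j ≤ m - 1)
    (hn : n = ∑ j ∈ Icc s t, d j * m ^ j)
    (d₀ : ℕ) (hd₀ : d₀ ≤ m - 1) :
    (Nat.card {c : ℕ →₀ ℕ // IsMaryPartition m (n - d₀) c ∧ MaryWithoutGaps c} : ℤ)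
      ≡ (if Even s then 0 else 1)
          + (-1) ^ (s - 1) * ((d s : ℤ) - 1) * ∑ i ∈ Icc s t, ∏ j ∈ Icc (s + 1) i, (d j : ℤ)
        [ZMOD (m : ℤ)] :=
  mary_gapfree_count_mod_general m n s t hs hst d hds hd hn d₀ hd₀
end
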